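/- arXiv:1611.01926 — 11 statements merged into one kernel-verified Lean document; each statement's English description precedes it below -/
import Mathlib

section
/- Let S, K be subrings of a finite ring R and r ∈ R with r ≠ 0 such that r = s₀k₀ - k₀s₀ for some s₀ ∈ S, k₀ ∈ K. Then Pr_r(S,K) ≥ |Z(S,K)| · |Z(K,S)| / (|S||K|), where Z(S,K) = {s ∈ S : sk = ks for all k ∈ K}. -/
/-- `Pr_r(S,K)`: the probability that a uniformly random pair `(s,k) ∈ S × K`
satisfies `s*k - k*s = r`. -/
noncomputable def ringPr {R : Type*} [NonUnitalRing R] [Fintype R]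
    (S K : NonUnitalSubring R) (r : R) : ℚ :=
  (Nat.card {p : R × R // p.1 ∈ S ∧ p.2 ∈ K ∧ p.1 * p.2 - p.2 * p.1 = r} : ℚ) /
    ((Nat.card S : ℚ) * (Nat.card K : ℚ))

theorem ringPr_ge_card_centers {R : Type*} [NonUnitalRing R] [Fintype R]
    (S K : NonUnitalSubring R) (r : R) (hr : r ≠ 0)
    (h : ∃ s₀ ∈ S, ∃ k₀ ∈ K, s₀ * k₀ - k₀ * s₀ = r) :
    ringPr S K r ≥
      ((Nat.card {s : R // s ∈ S ∧ ∀ k ∈ K, s * k = k * s} : ℚ) *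
        (Nat.card {k : R // k ∈ K ∧ ∀ s ∈ S, k * s = s * k} : ℚ)) /
        ((Nat.card S : ℚ) * (Nat.card K : ℚ)) := by
  obtain ⟨s₀, hs₀, k₀, hk₀, hcomm⟩ := h
  unfold ringPr
  have hS : 0 < (Nat.card S : ℚ) := by
    exact_mod_cast Nat.card_pos (α := S)
  have hK : 0 < (Nat.card K : ℚ) := by
    exact_mod_cast Nat.card_pos (α := K)
  rw [ge_iff_le, div_le_div_iff_of_pos_right (by positivity)]
  have key : Nat.card {s : R // s ∈ S ∧ ∀ k ∈ K, s * k = k * s} *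
      Nat.card {k : R // k ∈ K ∧ ∀ s ∈ S, k * s = s * k} ≤
      Nat.card {p : R × R // p.1 ∈ S ∧ p.2 ∈ K ∧ p.1 * p.2 - p.2 * p.1 = r} := by
    rw [← Nat.card_prod]
    apply Nat.card_le_card_of_injective
      (f := fun zw => ⟨(s₀ + zw.1.val, k₀ + zw.2.val), by
        obtain ⟨⟨z, hzS, hz⟩, ⟨w, hwK, hw⟩⟩ := zw
        refine ⟨S.add_mem hs₀ hzS, K.add_mem hk₀ hwK, ?_⟩
        have h1 : z * k₀ = k₀ * z := hz k₀ hk₀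
        have h2 : z * w = w * z := hz w hwK
        have h3 : w * s₀ = s₀ * w := hw s₀ hs₀
        simp only [mul_add, add_mul]
        rw [← hcomm]
        rw [h1, h2, h3]
        abel⟩)
    intro ⟨⟨z, _⟩, ⟨w, _⟩⟩ ⟨⟨z', _⟩, ⟨w', _⟩⟩ hEq
    simp only [Subtype.mk.injEq, Prod.mk.injEq, add_right_inj] at hEq
    ext <;> simp [hEq.1, hEq.2]
  exact_mod_cast key
end

section
/- Let R be a finite ring and r ∈ R a nonzero element of the form ab - ba for some a,b ∈ R. Then Pr_r(R) := |{(x,y) ∈ R×R : xy - yx = r}|/|R|² ≥ 3/|R:Z(R)|², where Z(R) is the center of R. -/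
theorem ringPr_self_ge {R : Type*} [NonUnitalRing R] [Fintype R]
    (r : R) (hr : r ≠ 0) (h : ∃ a b : R, a * b - b * a = r) :
    ringPr (⊤ : NonUnitalSubring R) ⊤ r ≥
      3 / ((Nat.card R : ℚ) / (Nat.card (NonUnitalSubring.center R) : ℚ)) ^ 2 := by
  classical
  obtain ⟨a, b, hab⟩ := h
  set Z := NonUnitalSubring.center R with hZ
  -- commutator is unchanged by central shifts
  have key : ∀ (u v : R) (z w : Z), (u + z) * (v + w) - (v + w) * (u + z) = u * v - v * u := by
    intro u v z w
    have hz : ∀ x : R, x * (z : R) = (z : R) * x :=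
      NonUnitalSubring.mem_center_iff.mp z.2
    have hw : ∀ x : R, x * (w : R) = (w : R) * x :=
      NonUnitalSubring.mem_center_iff.mp w.2
    have e1 : (u + z) * (v + w) = u * v + u * w + z * v + z * w := by noncomm_ring
    have e2 : (v + w) * (u + z) = v * u + v * z + w * u + w * z := by noncomm_ring
    rw [e1, e2, hw u, ← hz v, hw (z : R)]
    abel
  -- the three injective families
  let T := {p : R × R // p.1 ∈ (⊤ : NonUnitalSubring R) ∧ p.2 ∈ (⊤ : NonUnitalSubring R)
      ∧ p.1 * p.2 - p.2 * p.1 = r}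
  let f : Fin 3 × Z × Z → T := fun x =>
    match x.1 with
    | 0 => ⟨(a + x.2.1, b + x.2.2), trivial, trivial, by rw [key]; exact hab⟩
    | 1 => ⟨(a + b + x.2.1, b + x.2.2), trivial, trivial, by
        rw [key]; rw [show (a+b)*b - b*(a+b) = a*b - b*a by noncomm_ring]; exact hab⟩
    | 2 => ⟨(a + x.2.1, a + b + x.2.2), trivial, trivial, by
        rw [key]; rw [show a*(a+b) - (a+b)*a = a*b - b*a by noncomm_ring]; exact hab⟩
  have hbZ : b ∉ Z := by
    intro hb
    exact hr (by rw [← hab, NonUnitalSubring.mem_center_iff.mp hb a, sub_self])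
  have haZ : a ∉ Z := by
    intro ha
    exact hr (by rw [← hab, ← NonUnitalSubring.mem_center_iff.mp ha b, sub_self])
  have hfinj : Function.Injective f := by
    rintro ⟨i, z, w⟩ ⟨i', z', w'⟩ hEq
    have hEq' : (f (i, z, w)).1 = (f (i', z', w')).1 := by rw [hEq]
    fin_cases i <;> fin_cases i' <;>
      simp only [f, Prod.mk.injEq] at hEq' <;> obtain ⟨h1, h2⟩ := hEq'
    · simp [Subtype.ext (add_left_cancel h1), Subtype.ext (add_left_cancel h2)]
    · refine absurd (show b ∈ Z from ?_) hbZ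
      have hb : b = (z : R) - z' := sub_eq_zero.mp (by
        rw [show b - ((z : R) - z') = -((a + (z : R)) - (a + b + z')) from by abel, h1,
          sub_self, neg_zero])
      rw [hb]; exact Z.sub_mem z.2 z'.2
    · refine absurd (show a ∈ Z from ?_) haZ
      have ha : a = (w : R) - w' := sub_eq_zero.mp (by
        rw [show a - ((w : R) - w') = -((b + (w : R)) - (a + b + w')) from by abel, h2,
          sub_self, neg_zero])
      rw [ha]; exact Z.sub_mem w.2 w'.2
    · refine absurd (show b ∈ Z from ?_) hbZ
      have hb : b = (z' : R) - z := sub_eq_zero.mp (by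
        rw [show b - ((z' : R) - z) = (a + b + (z : R)) - (a + z') from by abel, h1, sub_self])
      rw [hb]; exact Z.sub_mem z'.2 z.2
    · simp [Subtype.ext (add_left_cancel h1), Subtype.ext (add_left_cancel h2)]
    · refine absurd (show b ∈ Z from ?_) hbZ
      have hb : b = (z' : R) - z := sub_eq_zero.mp (by
        rw [show b - ((z' : R) - z) = (a + b + (z : R)) - (a + z') from by abel, h1, sub_self])
      rw [hb]; exact Z.sub_mem z'.2 z.2
    · refine absurd (show a ∈ Z from ?_) haZ
      have ha : a = (w' : R) - w := sub_eq_zero.mp (by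
        rw [show a - ((w' : R) - w) = (a + b + (w : R)) - (b + w') from by abel, h2, sub_self])
      rw [ha]; exact Z.sub_mem w'.2 w.2
    · refine absurd (show b ∈ Z from ?_) hbZ
      have hb : b = (z : R) - z' := sub_eq_zero.mp (by
        rw [show b - ((z : R) - z') = -((a + (z : R)) - (a + b + z')) from by abel, h1,
          sub_self, neg_zero])
      rw [hb]; exact Z.sub_mem z.2 z'.2
    · simp [Subtype.ext (add_left_cancel h1), Subtype.ext (add_left_cancel h2)]
  have hcard : 3 * Nat.card Z * Nat.card Z ≤ Nat.card T := by
    have := Nat.card_le_card_of_injective f hfinj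
    simpa [Nat.card_prod, Nat.card_eq_fintype_card, mul_assoc] using this
  -- numeric bookkeeping
  have htop : Nat.card (⊤ : NonUnitalSubring R) = Nat.card R := by
    rw [← Nat.card_congr (Equiv.Set.univ R)]
    rfl
  have hRpos : 0 < (Nat.card R : ℚ) := by
    have : 0 < Nat.card R := Nat.card_pos
    exact_mod_cast this
  have hZpos : 0 < (Nat.card Z : ℚ) := by
    have : 0 < Nat.card Z := Nat.card_pos
    exact_mod_cast this
  unfold ringPr
  rw [htop]
  rw [ge_iff_le, div_pow, div_div_eq_mul_div, div_le_div_iff₀ (by positivity) (by positivity)]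
  have hT : (3 : ℚ) * (Nat.card Z : ℚ) * (Nat.card Z : ℚ) ≤ (Nat.card T : ℚ) := by
    exact_mod_cast hcard
  calc 3 * (Nat.card Z : ℚ) ^ 2 * ((Nat.card R : ℚ) * (Nat.card R : ℚ))
      = (3 * (Nat.card Z : ℚ) * (Nat.card Z : ℚ)) * ((Nat.card R : ℚ) * (Nat.card R : ℚ)) := by
        ring
    _ ≤ (Nat.card T : ℚ) * ((Nat.card R : ℚ) * (Nat.card R : ℚ)) := by
        apply mul_le_mul_of_nonneg_right hT (by positivity)
    _ = (Nat.card T : ℚ) * (Nat.card R : ℚ) ^ 2 := by ring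
end

section
/- Let S, K be subrings of a finite ring R and r ∈ R. Then Pr_r(S,K) ≤ Pr(S,K), with equality if and only if r = 0 (assuming some pair (s,k) ∈ S×K satisfies sk-ks = r). -/
open scoped Classical

section Aux
variable {R : Type*} [NonUnitalRing R] [Fintype R]

/-- fiber count -/
noncomputable def fibCard (K : NonUnitalSubring R) (s r : R) : ℕ :=
  Nat.card {k : K // s * (k : R) - (k : R) * s = r}

lemma fibCard_zero_pos (K : NonUnitalSubring R) (s : R) : 0 < fibCard K s 0 := by
  have : Nonempty {k : K // s * (k : R) - (k : R) * s = 0} :=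
    ⟨⟨0, by simp⟩⟩
  exact Nat.card_pos

lemma fibCard_eq_of_mem (K : NonUnitalSubring R) (s r : R)
    (k0 : R) (hmem : k0 ∈ K) (hk0 : s * k0 - k0 * s = r) :
    fibCard K s r = fibCard K s 0 := by
  refine Nat.card_congr ((Equiv.subRight (⟨k0, hmem⟩ : K)).subtypeEquiv fun k => ?_)
  simp only [Equiv.subRight_apply]
  have hc : ((k - (⟨k0, hmem⟩ : K) : K) : R) = (k : R) - k0 := rfl
  rw [hc, show s * ((k : R) - k0) - ((k : R) - k0) * s
      = (s * k - (k : R) * s) - (s * k0 - k0 * s) by rw [mul_sub, sub_mul]; abel, hk0]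
  exact (sub_eq_zero).symm

lemma fibCard_le (K : NonUnitalSubring R) (s r : R) :
    fibCard K s r ≤ fibCard K s 0 := by
  by_cases hne : ∃ k0 ∈ K, s * k0 - k0 * s = r
  · obtain ⟨k0, hmem, hk0⟩ := hne
    exact (fibCard_eq_of_mem K s r k0 hmem hk0).le
  · have : IsEmpty {k : K // s * (k : R) - (k : R) * s = r} := by
      constructor; rintro ⟨⟨k, hk⟩, hkr⟩; exact hne ⟨k, hk, hkr⟩
    simp [fibCard, Nat.card_of_isEmpty]

lemma fibCard_eq_iff (K : NonUnitalSubring R) (s r : R) :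
    fibCard K s r = fibCard K s 0 ↔ ∃ k0 ∈ K, s * k0 - k0 * s = r := by
  constructor
  · intro heq
    have hpos : 0 < fibCard K s r := heq ▸ fibCard_zero_pos K s
    have : Nonempty {k : K // s * (k : R) - (k : R) * s = r} := Nat.card_pos_iff.mp hpos |>.1
    obtain ⟨⟨k, hk⟩, hkr⟩ := this
    exact ⟨k, hk, hkr⟩
  · rintro ⟨k0, hmem, hk0⟩; exact fibCard_eq_of_mem K s r k0 hmem hk0

lemma card_comm_eq_sum (S K : NonUnitalSubring R) (r : R) :
    Nat.card {p : R × R // p.1 ∈ S ∧ p.2 ∈ K ∧ p.1 * p.2 - p.2 * p.1 = r}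
      = ∑ s : S, fibCard K (s : R) r := by
  rw [show (∑ s : S, fibCard K (s : R) r)
      = Nat.card (Σ s : S, {k : K // (s : R) * (k : R) - (k : R) * (s : R) = r}) by
    simp [Nat.card_eq_fintype_card, Fintype.card_sigma, fibCard]]
  refine Nat.card_congr ?_
  exact { toFun := fun p => ⟨⟨p.1.1, p.2.1⟩, ⟨p.1.2, p.2.2.1⟩, p.2.2.2⟩
          invFun := fun q => ⟨⟨(q.1 : R), (q.2.1 : R)⟩, q.1.2, q.2.1.2, q.2.2⟩
          left_inv := fun p => rfl
          right_inv := fun q => rfl }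
end Aux

theorem ringPr_le_ringPr_zero {R : Type*} [NonUnitalRing R] [Fintype R]
    (S K : NonUnitalSubring R) (r : R)
    (h : ∃ s ∈ S, ∃ k ∈ K, s * k - k * s = r) :
    ringPr S K r ≤ ringPr S K 0 ∧ (ringPr S K r = ringPr S K 0 ↔ r = 0) := by
  set Nr := Nat.card {p : R × R // p.1 ∈ S ∧ p.2 ∈ K ∧ p.1 * p.2 - p.2 * p.1 = r} with hNr
  set N0 := Nat.card {p : R × R // p.1 ∈ S ∧ p.2 ∈ K ∧ p.1 * p.2 - p.2 * p.1 = 0} with hN0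
  have hle : Nr ≤ N0 := by
    rw [hNr, hN0, card_comm_eq_sum, card_comm_eq_sum]
    exact Finset.sum_le_sum fun s _ => fibCard_le K (s : R) r
  have hDpos : (0 : ℚ) < (Nat.card S : ℚ) * (Nat.card K : ℚ) := by
    have h1 : 0 < Nat.card S := Nat.card_pos
    have h2 : 0 < Nat.card K := Nat.card_pos
    positivity
  constructor
  · unfold ringPr
    gcongr

  · constructor
    · intro heq
      have hNN : Nr = N0 := by
        unfold ringPr at heq
        rw [div_eq_div_iff hDpos.ne' hDpos.ne'] at heq
        exact_mod_cast mul_right_cancel₀ hDpos.ne' heq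
      have hsum : (∑ s : S, fibCard K (s : R) r) = ∑ s : S, fibCard K (s : R) 0 := by
        rw [← card_comm_eq_sum, ← card_comm_eq_sum]; exact hNN
      have hall := (Finset.sum_eq_sum_iff_of_le (s := Finset.univ)
        (fun (s : S) _ => fibCard_le K (s : R) r)).mp hsum
      have h0 : fibCard K (((0 : S) : R)) r = fibCard K (((0 : S) : R)) 0 :=
        hall (0 : S) (Finset.mem_univ _)
      have := (fibCard_eq_iff K ((0 : S) : R) r).mp h0
      obtain ⟨k0, hmem, hk0⟩ := this
      simpa using hk0.symm
    · rintro rfl; rfl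
end

section
/- Let S ⊆ K be subrings of a finite ring R. Then Pr(S,K) ≤ |K:S| · Pr(K), with equality if and only if S = K, where Pr(K) = Pr(K,K). -/
namespace NonUnitalSubring

variable {R : Type*} [NonUnitalRing R]

def commutatorPairs (S K : NonUnitalSubring R) (r : R) : Set (R × R) :=
  {p | p.1 ∈ S ∧ p.2 ∈ K ∧ p.1 * p.2 - p.2 * p.1 = r}

theorem commutatorPairs_mono_left {S S' : NonUnitalSubring R} (h : S ≤ S')
    (K : NonUnitalSubring R) (r : R) : commutatorPairs S K r ⊆ commutatorPairs S' K r :=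
  fun _ hp => ⟨h hp.1, hp.2⟩

/-- The pairs `(s, 0)` witness strictness. -/
theorem commutatorPairs_zero_strictMono_left {S S' : NonUnitalSubring R} (h : S < S')
    (K : NonUnitalSubring R) : commutatorPairs S K 0 ⊂ commutatorPairs S' K 0 := by
  obtain ⟨s, hsS', hsS⟩ := SetLike.exists_of_lt h
  refine Set.ssubset_iff_of_subset (commutatorPairs_mono_left h.le K 0) |>.mpr ⟨(s, 0), ?_, ?_⟩
  · exact ⟨hsS', K.zero_mem, by simp⟩
  · exact fun hs => hsS hs.1

variable [Finite R]

theorem ncard_commutatorPairs_zero_lt {S S' : NonUnitalSubring R} (h : S < S')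
    (K : NonUnitalSubring R) :
    (commutatorPairs S K 0).ncard < (commutatorPairs S' K 0).ncard :=
  Set.ncard_lt_ncard (commutatorPairs_zero_strictMono_left h K)

end NonUnitalSubring

open NonUnitalSubring

section

variable {R : Type*} [NonUnitalRing R] [Fintype R]

theorem ringPr_eq_ncard_div (S K : NonUnitalSubring R) (r : R) :
    ringPr S K r = (commutatorPairs S K r).ncard / ((Nat.card S : ℚ) * Nat.card K) := by
  rw [ringPr, ← Nat.card_coe_set_eq]
  rfl

theorem index_mul_ringPr_self (S K : NonUnitalSubring R) (r : R) :
    (Nat.card K / Nat.card S : ℚ) * ringPr K K r =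
      (commutatorPairs K K r).ncard / ((Nat.card S : ℚ) * Nat.card K) := by
  have hK : (Nat.card K : ℚ) ≠ 0 := by exact_mod_cast Nat.card_pos.ne'
  rw [ringPr_eq_ncard_div]
  field_simp

end

theorem ringPr_le_index_mul {R : Type*} [NonUnitalRing R] [Fintype R]
    (S K : NonUnitalSubring R) (hSK : S ≤ K) :
    ringPr S K 0 ≤ ((Nat.card K : ℚ) / (Nat.card S : ℚ)) * ringPr K K 0 ∧
      (ringPr S K 0 = ((Nat.card K : ℚ) / (Nat.card S : ℚ)) * ringPr K K 0 ↔ S = K) := by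
  have hpos : (0 : ℚ) < Nat.card S * Nat.card K := by
    exact_mod_cast Nat.mul_pos Nat.card_pos Nat.card_pos
  rw [index_mul_ringPr_self, ringPr_eq_ncard_div, div_le_div_iff_of_pos_right hpos,
    div_left_inj' hpos.ne', Nat.cast_le, Nat.cast_inj]
  refine ⟨Set.ncard_le_ncard (commutatorPairs_mono_left hSK K 0), fun h => ?_, fun h => h ▸ rfl⟩
  by_contra hne
  exact (ncard_commutatorPairs_zero_lt (lt_of_le_of_ne hSK hne) K).ne h
end

section
/- Let S, K be subrings of a finite ring R, let p be the smallest prime dividing |R|, and let r ∈ R be nonzero with r = s₀k₀-k₀s₀ for some s₀∈S, k₀∈K. Then Pr_r(S,K) ≤ (|S| - |Z(S,K)|)/(p|S|) < 1/p. -/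
/-- The fiber `{k ∈ K : sk - ks = r}` is at most as large as the centralizer of `s` in `K`. -/
lemma fiber_card_le_cent {R : Type*} [NonUnitalRing R] [Fintype R]
    (K : NonUnitalSubring R) (s r : R) :
    Nat.card {k : R // k ∈ K ∧ s * k - k * s = r} ≤
      Nat.card {k : R // k ∈ K ∧ s * k = k * s} := by
  by_cases hne : Nonempty {k : R // k ∈ K ∧ s * k - k * s = r}
  · obtain ⟨⟨k₁, hk₁K, hk₁⟩⟩ := hne
    apply Nat.card_le_card_of_injective
      (f := fun x => (⟨x.1 - k₁, sub_mem x.2.1 hk₁K, by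
        have h2 : s * x.1 - x.1 * s = s * k₁ - k₁ * s := by rw [hk₁, x.2.2]
        have h3 := (sub_eq_sub_iff_sub_eq_sub).mp h2
        rw [mul_sub, sub_mul]
        exact h3⟩ : {k : R // k ∈ K ∧ s * k = k * s}))
    intro a b hab
    have h4 : a.1 - k₁ = b.1 - k₁ := congrArg Subtype.val hab
    exact Subtype.ext (sub_left_inj.mp h4)
  · haveI := not_nonempty_iff.mp hne
    simp [Nat.card_of_isEmpty]

/-- If `s` does not centralize `K`, then its centralizer in `K` has index at least `p`. -/
lemma cent_card_mul_le {R : Type*} [NonUnitalRing R] [Fintype R]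
    (K : NonUnitalSubring R) (p : ℕ) (hp : p.Prime) (hmin : ∀ q : ℕ, q.Prime → q ∣ Nat.card R → p ≤ q)
    (s : R) (hs : ¬ ∀ k ∈ K, s * k = k * s) :
    p * Nat.card {k : R // k ∈ K ∧ s * k = k * s} ≤ Nat.card K := by
  classical
  set C : AddSubgroup R :=
    { carrier := {k : R | k ∈ K ∧ s * k = k * s}
      add_mem' := fun {a b} ha hb => ⟨add_mem ha.1 hb.1, by
        rw [mul_add, add_mul, ha.2, hb.2]⟩
      zero_mem' := ⟨zero_mem K, by rw [mul_zero, zero_mul]⟩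
      neg_mem' := fun {a} ha => ⟨neg_mem ha.1, by rw [mul_neg, neg_mul, ha.2]⟩ } with hC
  have hCcard : Nat.card {k : R // k ∈ K ∧ s * k = k * s} = Nat.card C := rfl
  have hle : C ≤ K.toAddSubgroup := fun x hx => hx.1
  have hdvd : Nat.card C ∣ Nat.card K.toAddSubgroup := AddSubgroup.card_dvd_of_le hle
  have hKK : Nat.card K.toAddSubgroup = Nat.card K := rfl
  rw [hKK] at hdvd
  have hKpos : 0 < Nat.card K := Nat.card_pos
  obtain ⟨n, hn⟩ := hdvd
  have hCpos : 0 < Nat.card C := Nat.card_pos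
  have hn0 : n ≠ 0 := by rintro rfl; rw [mul_zero] at hn; omega
  have hn1 : n ≠ 1 := by
    rintro rfl
    rw [mul_one] at hn
    push_neg at hs
    obtain ⟨k, hkK, hk⟩ := hs
    have hsub : (C : Set R) ⊆ (K : Set R) := hle
    have hcards : ((K : Set R)).ncard ≤ ((C : Set R)).ncard := by
      rw [← Nat.card_coe_set_eq, ← Nat.card_coe_set_eq]
      have h1 : Nat.card (C : Set R) = Nat.card C := rfl
      have h2 : Nat.card (K : Set R) = Nat.card K := rfl
      rw [h1, h2, hn]
    have := Set.eq_of_subset_of_ncard_le hsub hcards (Set.toFinite _)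
    have hkC : k ∈ (C : Set R) := this ▸ hkK
    exact hk hkC.2
  have hq : p ≤ n := by
    have hqp := Nat.minFac_prime hn1
    have hqdvd : n.minFac ∣ Nat.card R := by
      have h1 : n ∣ Nat.card K := Dvd.intro_left _ hn.symm
      have h2 : Nat.card K ∣ Nat.card R := by
        exact AddSubgroup.card_addSubgroup_dvd_card K.toAddSubgroup
      exact (n.minFac_dvd.trans h1).trans h2
    exact (hmin _ hqp hqdvd).trans (Nat.minFac_le (Nat.pos_of_ne_zero hn0))
  calc p * Nat.card {k : R // k ∈ K ∧ s * k = k * s} = Nat.card C * p := by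
        rw [hCcard, mul_comm]
    _ ≤ Nat.card C * n := Nat.mul_le_mul_left _ hq
    _ = Nat.card K := hn.symm

theorem ringPr_lt_inv_smallest_prime {R : Type*} [NonUnitalRing R] [Fintype R]
    (S K : NonUnitalSubring R) (p : ℕ) (hp : p.Prime) (hpdvd : p ∣ Nat.card R)
    (hmin : ∀ q : ℕ, q.Prime → q ∣ Nat.card R → p ≤ q)
    (r : R) (hr : r ≠ 0) (h : ∃ s₀ ∈ S, ∃ k₀ ∈ K, s₀ * k₀ - k₀ * s₀ = r) :
    ringPr S K r ≤
        ((Nat.card S : ℚ) - (Nat.card {s : R // s ∈ S ∧ ∀ k ∈ K, s * k = k * s} : ℚ)) /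
          ((p : ℚ) * (Nat.card S : ℚ)) ∧
      ((Nat.card S : ℚ) - (Nat.card {s : R // s ∈ S ∧ ∀ k ∈ K, s * k = k * s} : ℚ)) /
          ((p : ℚ) * (Nat.card S : ℚ)) < 1 / (p : ℚ) := by
  classical
  set cS := Nat.card S with hcS
  set cK := Nat.card K with hcK
  set cZ := Nat.card {s : R // s ∈ S ∧ ∀ k ∈ K, s * k = k * s} with hcZ
  set N := Nat.card {q : R × R // q.1 ∈ S ∧ q.2 ∈ K ∧ q.1 * q.2 - q.2 * q.1 = r} with hN
  have hSpos : 0 < cS := Nat.card_pos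
  have hKpos : 0 < cK := Nat.card_pos
  have hppos : 0 < p := hp.pos
  have hZpos : 0 < cZ := by
    rw [hcZ]
    have : Nonempty {s : R // s ∈ S ∧ ∀ k ∈ K, s * k = k * s} :=
      ⟨⟨0, zero_mem S, fun k _ => by rw [zero_mul, mul_zero]⟩⟩
    exact Nat.card_pos
  have hZS : cZ ≤ cS := by
    rw [hcZ, hcS]
    exact Nat.card_le_card_of_injective
      (fun z => (⟨z.1, z.2.1⟩ : S)) (fun a b hab => by
        apply Subtype.ext
        simpa [Subtype.ext_iff] using hab)
  -- the key counting inequality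
  have key : p * N ≤ (cS - cZ) * cK := by
    -- reduce to Fintype cards and sum over s
    have hNsum : N = ∑ s : R, Fintype.card {k : R // s ∈ S ∧ k ∈ K ∧ s * k - k * s = r} := by
      rw [hN, Nat.card_eq_fintype_card,
        Fintype.card_congr (Equiv.subtypeProdEquivSigmaSubtype
          (fun a b : R => a ∈ S ∧ b ∈ K ∧ a * b - b * a = r)),
        Fintype.card_sigma]
    rw [hNsum, Finset.mul_sum]
    have hbound : ∀ s : R, p * Fintype.card {k : R // s ∈ S ∧ k ∈ K ∧ s * k - k * s = r}
        ≤ if s ∈ S ∧ ¬ (∀ k ∈ K, s * k = k * s) then cK else 0 := by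
      intro s
      by_cases hsS : s ∈ S
      · by_cases hz : ∀ k ∈ K, s * k = k * s
        · have hcard0 : Fintype.card {k : R // s ∈ S ∧ k ∈ K ∧ s * k - k * s = r} = 0 := by
            rw [Fintype.card_eq_zero_iff]
            exact ⟨fun x => hr (by rw [← x.2.2.2, hz x.1 x.2.2.1, sub_self])⟩
          rw [hcard0, mul_zero]
          exact Nat.zero_le _
        · rw [if_pos ⟨hsS, hz⟩]
          calc p * Fintype.card {k : R // s ∈ S ∧ k ∈ K ∧ s * k - k * s = r}
              = p * Nat.card {k : R // k ∈ K ∧ s * k - k * s = r} := by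
                rw [← Nat.card_eq_fintype_card]
                congr 1
                exact Nat.card_congr (Equiv.subtypeEquivRight (fun k => by tauto))
            _ ≤ p * Nat.card {k : R // k ∈ K ∧ s * k = k * s} :=
                Nat.mul_le_mul_left _ (fiber_card_le_cent K s r)
            _ ≤ cK := cent_card_mul_le K p hp hmin s hz
      · haveI : IsEmpty {k : R // s ∈ S ∧ k ∈ K ∧ s * k - k * s = r} :=
          ⟨fun k => hsS k.2.1⟩
        rw [Fintype.card_eq_zero, mul_zero, if_neg (fun hc => hsS hc.1)]
    calc ∑ s : R, p * Fintype.card {k : R // s ∈ S ∧ k ∈ K ∧ s * k - k * s = r}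
        ≤ ∑ s : R, (if s ∈ S ∧ ¬ (∀ k ∈ K, s * k = k * s) then cK else 0) :=
          Finset.sum_le_sum (fun s _ => hbound s)
      _ = (Finset.univ.filter (fun s : R => s ∈ S ∧ ¬ (∀ k ∈ K, s * k = k * s))).card * cK := by
          rw [Finset.sum_ite, Finset.sum_const, Finset.sum_const_zero, add_zero, smul_eq_mul]
      _ = (cS - cZ) * cK := by
          congr 1
          have hsplit := Finset.card_filter_add_card_filter_not
            (s := Finset.univ.filter (fun s : R => s ∈ S))
            (p := fun s : R => ∀ k ∈ K, s * k = k * s)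
          rw [Finset.filter_filter, Finset.filter_filter] at hsplit
          have h1 : (Finset.univ.filter (fun s : R => s ∈ S)).card = cS := by
            rw [hcS, Nat.card_eq_fintype_card, Fintype.card_subtype]
          have h2 : (Finset.univ.filter (fun s : R => s ∈ S ∧ ∀ k ∈ K, s * k = k * s)).card = cZ := by
            rw [hcZ, Nat.card_eq_fintype_card, Fintype.card_subtype]
          omega
  -- now the rational arithmetic
  have hcast : ((cS : ℚ) - cZ) = ((cS - cZ : ℕ) : ℚ) := by
    rw [Nat.cast_sub hZS]
  have hSq : (0:ℚ) < cS := by exact_mod_cast hSpos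
  have hKq : (0:ℚ) < cK := by exact_mod_cast hKpos
  have hpq : (0:ℚ) < p := by exact_mod_cast hppos
  have hkeyq : (p : ℚ) * N ≤ ((cS : ℚ) - cZ) * cK := by
    rw [hcast]
    exact_mod_cast key
  constructor
  · rw [ringPr]
    rw [div_le_div_iff₀ (by positivity) (by positivity)]
    have hNc : (Nat.card {q : R × R // q.1 ∈ S ∧ q.2 ∈ K ∧ q.1 * q.2 - q.2 * q.1 = r} : ℚ) = (N : ℚ) := by
      rw [hN]
    rw [hNc]
    nlinarith [hkeyq, hSq.le, hKq.le]
  · rw [div_lt_div_iff₀ (by positivity) hpq]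
    have h1q : (1:ℚ) ≤ cZ := by exact_mod_cast hZpos
    nlinarith
end

section
/- Let S₁ ⊆ S₂ and K₁ ⊆ K₂ be subrings of a finite ring R and r ∈ R. Then Pr_r(S₁,K₁) ≤ |S₂:S₁|·|K₂:K₁|·Pr_r(S₂,K₂). -/
theorem ringPr_le_indices_mul {R : Type*} [NonUnitalRing R] [Fintype R]
    (S₁ S₂ K₁ K₂ : NonUnitalSubring R) (hS : S₁ ≤ S₂) (hK : K₁ ≤ K₂) (r : R) :
    ringPr S₁ K₁ r ≤
      ((Nat.card S₂ : ℚ) / (Nat.card S₁ : ℚ)) * ((Nat.card K₂ : ℚ) / (Nat.card K₁ : ℚ)) *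
        ringPr S₂ K₂ r := by
  classical
  have hcard : ∀ T : NonUnitalSubring R, 0 < (Nat.card T : ℚ) := by
    intro T
    have : 0 < Nat.card T := Nat.card_pos
    exact_mod_cast this
  have hN : (Nat.card {p : R × R // p.1 ∈ S₁ ∧ p.2 ∈ K₁ ∧ p.1 * p.2 - p.2 * p.1 = r} : ℚ)
      ≤ (Nat.card {p : R × R // p.1 ∈ S₂ ∧ p.2 ∈ K₂ ∧ p.1 * p.2 - p.2 * p.1 = r} : ℚ) := by
    have : Nat.card ({p : R × R | p.1 ∈ S₁ ∧ p.2 ∈ K₁ ∧ p.1 * p.2 - p.2 * p.1 = r})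
        ≤ Nat.card ({p : R × R | p.1 ∈ S₂ ∧ p.2 ∈ K₂ ∧ p.1 * p.2 - p.2 * p.1 = r}) := by
      apply Nat.card_mono (Set.toFinite _)
      rintro p ⟨h1, h2, h3⟩
      exact ⟨hS h1, hK h2, h3⟩
    exact_mod_cast this
  have h1 := hcard S₁
  have h2 := hcard K₁
  have h3 := hcard S₂
  have h4 := hcard K₂
  unfold ringPr
  rw [div_mul_div_comm, div_mul_div_comm,
    div_le_div_iff₀ (by positivity) (by positivity)]
  nlinarith [mul_le_mul_of_nonneg_right hN (le_of_lt (mul_pos (mul_pos h1 h2) (mul_pos h3 h4)))]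
end

section
/- Let S, K₁ ⊆ K₂ be subrings of a finite ring R. Then Pr(S,K₁) ≥ Pr(S,K₂) ≥ (1/|K₂:K₁|)·(Pr(S,K₁) + (|K₂|-|K₁|)/(|S||K₁|)). -/
namespace AddSubgroup

variable {G : Type*} [AddGroup G]

theorem card_mul_relIndex_of_le {H K : AddSubgroup G} (h : H ≤ K) :
    Nat.card H * H.relIndex K = Nat.card K := by
  rw [← relIndex_bot_left, ← relIndex_bot_left, relIndex_mul_relIndex _ _ _ bot_le h]

theorem card_inf_mul_card_le_card_inf_mul_card (C : AddSubgroup G) {K₁ K₂ : AddSubgroup G}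
    (h : K₁ ≤ K₂) [Finite K₂] :
    Nat.card (C ⊓ K₂ : AddSubgroup G) * Nat.card K₁ ≤
      Nat.card (C ⊓ K₁ : AddSubgroup G) * Nat.card K₂ := by
  have hne : K₁.relIndex K₂ ≠ 0 :=
    (Nat.pos_of_dvd_of_pos (K₁.relIndex_dvd_card K₂) Nat.card_pos).ne'
  have hidx : (C ⊓ K₁).relIndex (C ⊓ K₂) ≤ K₁.relIndex K₂ :=
    calc (C ⊓ K₁).relIndex (C ⊓ K₂) = K₁.relIndex (C ⊓ K₂) := by
          rw [← inf_relIndex_right K₁ (C ⊓ K₂), inf_left_comm, inf_of_le_left h]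
      _ ≤ K₁.relIndex K₂ := relIndex_le_of_le_right inf_le_right hne
  rw [← card_mul_relIndex_of_le (inf_le_inf_left C h), ← card_mul_relIndex_of_le h,
    mul_right_comm, mul_assoc]
  exact Nat.mul_le_mul_left _ (Nat.mul_le_mul_left _ hidx)

end AddSubgroup

def commutingPairs {R : Type*} [Mul R] (S K : Set R) : Set (R × R) :=
  {p | p.1 ∈ S ∧ p.2 ∈ K ∧ Commute p.1 p.2}

theorem NonUnitalSubring.mem_centralizer_singleton_iff {R : Type*} [NonUnitalRing R] {s k : R} :
    k ∈ NonUnitalSubring.centralizer {s} ↔ Commute s k := by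
  simp [NonUnitalSubring.mem_centralizer_iff, Commute, SemiconjBy]

theorem card_commutingPairs_eq_sum {R : Type*} [NonUnitalRing R] [Finite R] (S : Set R)
    [Fintype S] (K : AddSubgroup R) :
    Nat.card (commutingPairs S K) =
      ∑ s : S, Nat.card ((NonUnitalSubring.centralizer {(s : R)}).toAddSubgroup ⊓ K :
        AddSubgroup R) := by
  rw [← Nat.card_sigma]
  exact Nat.card_congr
    { toFun := fun p => ⟨⟨p.1.1, p.2.1⟩, p.1.2,
        NonUnitalSubring.mem_centralizer_singleton_iff.mpr p.2.2.2, p.2.2.1⟩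
      invFun := fun x => ⟨(x.1.1, x.2.1), x.1.2, x.2.2.2,
        NonUnitalSubring.mem_centralizer_singleton_iff.mp x.2.2.1⟩
      left_inv := fun p => rfl
      right_inv := fun x => rfl }

theorem card_commutingPairs_mul_card_le {R : Type*} [NonUnitalRing R] [Finite R] (S : Set R)
    {K₁ K₂ : AddSubgroup R} (h : K₁ ≤ K₂) :
    Nat.card (commutingPairs S K₂) * Nat.card K₁ ≤
      Nat.card (commutingPairs S K₁) * Nat.card K₂ := by
  have := Fintype.ofFinite S
  rw [card_commutingPairs_eq_sum, card_commutingPairs_eq_sum, Finset.sum_mul, Finset.sum_mul]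
  exact Finset.sum_le_sum fun s _ => AddSubgroup.card_inf_mul_card_le_card_inf_mul_card _ h

theorem card_commutingPairs_add_card_le {R : Type*} [MulZeroClass R] [Finite R] {S : Set R}
    (hS : 0 ∈ S) {K₁ K₂ : Set R} (h : K₁ ⊆ K₂) :
    Nat.card (commutingPairs S K₁) + Nat.card K₂ ≤
      Nat.card (commutingPairs S K₂) + Nat.card K₁ := by
  simp only [Nat.card_coe_set_eq]
  set extra := (fun k => ((0 : R), k)) '' (K₂ \ K₁)
  have hsub : commutingPairs S K₁ ∪ extra ⊆ commutingPairs S K₂ := by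
    rintro p (⟨hp, hk, hc⟩ | ⟨k, ⟨hk₂, -⟩, rfl⟩)
    · exact ⟨hp, h hk, hc⟩
    · exact ⟨hS, hk₂, Commute.zero_left k⟩
  have hdisj : Disjoint (commutingPairs S K₁) extra := by
    rw [Set.disjoint_left]
    rintro p ⟨-, hk, -⟩ ⟨k, ⟨-, hk₁⟩, rfl⟩
    exact hk₁ hk
  have hextra : extra.ncard = (K₂ \ K₁).ncard :=
    Set.ncard_image_of_injective _ (Prod.mk_right_injective 0)
  have hle := Set.ncard_le_ncard hsub (Set.toFinite _)
  rw [Set.ncard_union_eq hdisj, hextra] at hle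
  have hdiff := Set.ncard_sdiff_add_ncard_of_subset h
  omega

theorem ringPr_zero_eq {R : Type*} [NonUnitalRing R] [Fintype R] (S K : NonUnitalSubring R) :
    ringPr S K 0 = (Nat.card (commutingPairs (S : Set R) K) : ℚ) /
      ((Nat.card S : ℚ) * (Nat.card K : ℚ)) := by
  rw [ringPr, Nat.card_congr (Equiv.subtypeEquivRight fun p => ?_)]
  simp [commutingPairs, sub_eq_zero, Commute, SemiconjBy]

theorem ringPr_mono_and_lower {R : Type*} [NonUnitalRing R] [Fintype R]
    (S K₁ K₂ : NonUnitalSubring R) (hK : K₁ ≤ K₂) :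
    ringPr S K₁ 0 ≥ ringPr S K₂ 0 ∧
      ringPr S K₂ 0 ≥ (1 / ((Nat.card K₂ : ℚ) / (Nat.card K₁ : ℚ))) *
        (ringPr S K₁ 0 +
          ((Nat.card K₂ : ℚ) - (Nat.card K₁ : ℚ)) / ((Nat.card S : ℚ) * (Nat.card K₁ : ℚ))) := by
  have hmono := card_commutingPairs_mul_card_le (S : Set R)
    (K₁ := K₁.toAddSubgroup) (K₂ := K₂.toAddSubgroup) hK
  have hlower := card_commutingPairs_add_card_le S.zero_mem (show (K₁ : Set R) ⊆ K₂ from hK)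
  rw [ringPr_zero_eq, ringPr_zero_eq]
  set n₁ := Nat.card (commutingPairs (S : Set R) K₁)
  set n₂ := Nat.card (commutingPairs (S : Set R) K₂)
  have hS : (0 : ℚ) < Nat.card S := Nat.cast_pos.mpr Nat.card_pos
  have hK₁ : (0 : ℚ) < Nat.card K₁ := Nat.cast_pos.mpr Nat.card_pos
  have hK₂ : (0 : ℚ) < Nat.card K₂ := Nat.cast_pos.mpr Nat.card_pos
  constructor
  · rw [ge_iff_le, div_le_div_iff₀ (by positivity) (by positivity)]
    have : (n₂ : ℚ) * Nat.card K₁ ≤ n₁ * Nat.card K₂ := by exact_mod_cast hmono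
    nlinarith
  · have : (n₁ : ℚ) + Nat.card K₂ ≤ n₂ + Nat.card K₁ := by exact_mod_cast hlower
    calc (1 / ((Nat.card K₂ : ℚ) / Nat.card K₁)) *
          ((n₁ : ℚ) / (Nat.card S * Nat.card K₁) +
            ((Nat.card K₂ : ℚ) - Nat.card K₁) / (Nat.card S * Nat.card K₁))
        = (n₁ + ((Nat.card K₂ : ℚ) - Nat.card K₁)) / (Nat.card S * Nat.card K₂) := by
          field_simp
      _ ≤ n₂ / (Nat.card S * Nat.card K₂) := by gcongr; linarith
end

section
/- Let S ⊆ K be subrings of a finite ring R, p the smallest prime dividing |R|, and suppose |S : Z(S,K)| = p^n. Then Pr(S,K) ≤ (p^n + p - 1)/p^{n+1}. Moreover, if S = K then Pr(S,K) ≥ (p^n + p^{n-1} - 1)/p^{2n-1}. -/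
theorem AddSubgroup.le_relIndex_of_lt {G : Type*} [AddGroup G] [Finite G] {p : ℕ}
    (hmin : ∀ q : ℕ, q.Prime → q ∣ Nat.card G → p ≤ q) {H K : AddSubgroup G} (hHK : H < K) :
    p ≤ H.relIndex K := by
  have hne : H.relIndex K ≠ 1 := relIndex_eq_one.not.mpr hHK.not_ge
  have hdvd : H.relIndex K ∣ Nat.card G :=
    (H.relIndex_dvd_card K).trans K.card_addSubgroup_dvd_card
  calc p ≤ (H.relIndex K).minFac := hmin _ (Nat.minFac_prime hne) ((Nat.minFac_dvd _).trans hdvd)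
    _ ≤ H.relIndex K := Nat.minFac_le (Nat.pos_of_dvd_of_pos hdvd Nat.card_pos)

theorem AddSubgroup.mul_card_le_card_of_lt {G : Type*} [AddGroup G] [Finite G] {p : ℕ}
    (hmin : ∀ q : ℕ, q.Prime → q ∣ Nat.card G → p ≤ q) {H K : AddSubgroup G} (hHK : H < K) :
    p * Nat.card H ≤ Nat.card K := by
  have hcard := relIndex_mul_relIndex ⊥ H K bot_le hHK.le
  rw [relIndex_bot_left, relIndex_bot_left] at hcard
  rw [← hcard, mul_comm]
  exact Nat.mul_le_mul_left _ (le_relIndex_of_lt hmin hHK)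

namespace NonUnitalSubring

variable {R : Type*} [NonUnitalRing R]

-- `Z(S, K)`
def relCenter (S K : NonUnitalSubring R) : NonUnitalSubring R := S ⊓ centralizer (K : Set R)

-- `C_K(s)`
def centralizerIn (K : NonUnitalSubring R) (s : R) : NonUnitalSubring R := K ⊓ centralizer {s}

variable {S K : NonUnitalSubring R}

theorem mem_relCenter {x : R} : x ∈ relCenter S K ↔ x ∈ S ∧ ∀ k ∈ K, x * k = k * x :=
  and_congr_right fun _ => forall₂_congr fun _ _ => eq_comm

theorem mem_centralizerIn {s k : R} : k ∈ centralizerIn K s ↔ k ∈ K ∧ s * k = k * s := by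
  simp [centralizerIn, mem_centralizer_iff]

theorem centralizerIn_eq_self {s : R} (hs : s ∈ centralizer (K : Set R)) : centralizerIn K s = K :=
  inf_eq_left.mpr fun k hk => by
    simpa [mem_centralizer_iff] using (hs k hk).symm

theorem mul_card_centralizerIn_le [Finite R] {p : ℕ}
    (hmin : ∀ q : ℕ, q.Prime → q ∣ Nat.card R → p ≤ q) {s : R} (hs : s ∉ centralizer (K : Set R)) :
    p * Nat.card (centralizerIn K s) ≤ Nat.card K := by
  exact AddSubgroup.mul_card_le_card_of_lt (H := (centralizerIn K s).toAddSubgroup)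
    (K := K.toAddSubgroup) hmin <| lt_of_le_not_ge (fun _ hk => (mem_centralizerIn.mp hk).1)
      fun hle => hs fun k hk => (mem_centralizerIn.mp (hle hk)).2.symm

theorem mul_card_relCenter_le [Finite R] {p : ℕ}
    (hmin : ∀ q : ℕ, q.Prime → q ∣ Nat.card R → p ≤ q) (hSK : S ≤ K) {s : R} (hsS : s ∈ S)
    (hs : s ∉ centralizer (K : Set R)) :
    p * Nat.card (relCenter S K) ≤ Nat.card (centralizerIn K s) := by
  refine AddSubgroup.mul_card_le_card_of_lt (H := (relCenter S K).toAddSubgroup)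
    (K := (centralizerIn K s).toAddSubgroup) hmin (lt_of_le_not_ge (fun z hz => ?_) ?_)
  · obtain ⟨hzS, hzK⟩ := mem_relCenter.mp hz
    exact mem_centralizerIn.mpr ⟨hSK hzS, (hzK s (hSK hsS)).symm⟩
  · exact fun hle => hs (hle (mem_centralizerIn.mpr ⟨hSK hsS, rfl⟩)).2

theorem card_relCenter :
    Nat.card (relCenter S K) = Nat.card {s : R // s ∈ S ∧ ∀ k ∈ K, s * k = k * s} :=
  Nat.card_congr (Equiv.subtypeEquivRight fun _ => mem_relCenter)

def commutingPairsEquiv : {x : R × R // x.1 ∈ S ∧ x.2 ∈ K ∧ x.1 * x.2 - x.2 * x.1 = 0} ≃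
    Σ s : S, centralizerIn K s where
  toFun x := ⟨⟨x.1.1, x.2.1⟩, x.1.2, mem_centralizerIn.mpr ⟨x.2.2.1, sub_eq_zero.mp x.2.2.2⟩⟩
  invFun y := ⟨(y.1, y.2), y.1.2, (mem_centralizerIn.mp y.2.2).1,
    sub_eq_zero.mpr (mem_centralizerIn.mp y.2.2).2⟩
  left_inv _ := rfl
  right_inv _ := rfl

theorem card_commutingPairs [Fintype R] [DecidablePred (· ∈ S)] :
    Nat.card {x : R × R // x.1 ∈ S ∧ x.2 ∈ K ∧ x.1 * x.2 - x.2 * x.1 = 0} =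
      ∑ s : S, Nat.card (centralizerIn K s) := by
  rw [Nat.card_congr commutingPairsEquiv, Nat.card_sigma]

section Counting

open Finset

variable [Fintype R] [DecidablePred (· ∈ S)] [DecidablePred (· ∈ centralizer (K : Set R))]

theorem card_filter_mem_centralizer :
    #(univ.filter fun s : S => (s : R) ∈ centralizer (K : Set R)) = Nat.card (relCenter S K) := by
  rw [← Fintype.card_subtype, ← Nat.card_eq_fintype_card]
  exact Nat.card_congr (Equiv.subtypeSubtypeEquivSubtypeInter _ _)

theorem card_relCenter_add_card_filter_not_mem_centralizer :
    Nat.card (relCenter S K) + #(univ.filter fun s : S => (s : R) ∉ centralizer (K : Set R)) =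
      Nat.card S := by
  rw [← card_filter_mem_centralizer, card_filter_add_card_filter_not, card_univ,
    Nat.card_eq_fintype_card]

theorem sum_card_centralizerIn_eq :
    ∑ s : S, Nat.card (centralizerIn K s) = Nat.card (relCenter S K) * Nat.card K +
      ∑ s ∈ univ.filter fun s : S => (s : R) ∉ centralizer (K : Set R),
        Nat.card (centralizerIn K s) := by
  rw [← sum_filter_add_sum_filter_not univ fun s : S => (s : R) ∈ centralizer (K : Set R),
    sum_congr rfl fun s hs => by rw [centralizerIn_eq_self (mem_filter.mp hs).2], sum_const,
    card_filter_mem_centralizer, smul_eq_mul]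

theorem mul_sum_card_centralizerIn_add_le {p : ℕ}
    (hmin : ∀ q : ℕ, q.Prime → q ∣ Nat.card R → p ≤ q) :
    p * ∑ s : S, Nat.card (centralizerIn K s) + Nat.card (relCenter S K) * Nat.card K ≤
      (p * Nat.card (relCenter S K) + Nat.card S) * Nat.card K := by
  set T := univ.filter fun s : S => (s : R) ∉ centralizer (K : Set R)
  have hT : p * ∑ s ∈ T, Nat.card (centralizerIn K s) ≤ #T * Nat.card K := by
    simpa [mul_sum] using
      sum_le_card_nsmul T _ _ fun s hs => mul_card_centralizerIn_le hmin (mem_filter.mp hs).2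
  rw [sum_card_centralizerIn_eq,
    ← card_relCenter_add_card_filter_not_mem_centralizer (S := S) (K := K)]
  linarith

theorem card_add_le_sum_card_centralizerIn {p : ℕ}
    (hmin : ∀ q : ℕ, q.Prime → q ∣ Nat.card R → p ≤ q) (hSK : S ≤ K) :
    Nat.card (relCenter S K) * Nat.card K + Nat.card S * (p * Nat.card (relCenter S K)) ≤
      ∑ s : S, Nat.card (centralizerIn K s) +
        Nat.card (relCenter S K) * (p * Nat.card (relCenter S K)) := by
  set T := univ.filter fun s : S => (s : R) ∉ centralizer (K : Set R)
  have hT : #T * (p * Nat.card (relCenter S K)) ≤ ∑ s ∈ T, Nat.card (centralizerIn K s) := by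
    simpa using card_nsmul_le_sum T _ _ fun s hs =>
      mul_card_relCenter_le hmin hSK s.2 (mem_filter.mp hs).2
  rw [sum_card_centralizerIn_eq,
    ← card_relCenter_add_card_filter_not_mem_centralizer (S := S) (K := K)]
  linarith

end Counting

end NonUnitalSubring

open NonUnitalSubring

section ringPr

variable {R : Type*} [NonUnitalRing R] [Fintype R]

theorem ringPr_zero_eq_sum (S K : NonUnitalSubring R) [DecidablePred (· ∈ S)] :
    ringPr S K 0 =
      ((∑ s : S, Nat.card (centralizerIn K s) : ℕ) : ℚ) / (Nat.card S * Nat.card K) := by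
  rw [ringPr, card_commutingPairs]

theorem ringPr_zero_le_of_card_eq_pow_mul (S K : NonUnitalSubring R) {p n : ℕ} (hp : 0 < p)
    (hmin : ∀ q : ℕ, q.Prime → q ∣ Nat.card R → p ≤ q)
    (hidx : Nat.card S = p ^ n * Nat.card (relCenter S K)) :
    ringPr S K 0 ≤ ((p : ℚ) ^ n + p - 1) / (p : ℚ) ^ (n + 1) := by
  classical
  have h := mul_sum_card_centralizerIn_add_le (S := S) (K := K) hmin
  rw [hidx] at h
  have hS : (0 : ℚ) < Nat.card S := by exact_mod_cast Nat.card_pos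
  have hK : (0 : ℚ) < Nat.card K := by exact_mod_cast Nat.card_pos
  rw [ringPr_zero_eq_sum, div_le_div_iff₀ (by positivity) (by positivity), hidx]
  set N := ∑ s : S, Nat.card (centralizerIn K s)
  set z := Nat.card (relCenter S K)
  qify at h
  push_cast
  calc (N : ℚ) * p ^ (n + 1) = p ^ n * (p * N) := by ring
    _ ≤ p ^ n * ((p * z + p ^ n * z) * Nat.card K - z * Nat.card K) := by gcongr; linarith
    _ = (p ^ n + p - 1) * (p ^ n * z * Nat.card K) := by ring

theorem le_ringPr_self_zero_of_card_eq_pow_mul (K : NonUnitalSubring R) {p n : ℕ} (hp : 0 < p)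
    (hmin : ∀ q : ℕ, q.Prime → q ∣ Nat.card R → p ≤ q)
    (hidx : Nat.card K = p ^ n * Nat.card (relCenter K K)) :
    ((p : ℚ) ^ n + (p : ℚ) ^ (n - 1) - 1) / (p : ℚ) ^ (2 * n - 1) ≤ ringPr K K 0 := by
  classical
  have h := card_add_le_sum_card_centralizerIn (S := K) hmin le_rfl
  have hK : (0 : ℚ) < Nat.card K := by exact_mod_cast Nat.card_pos
  rw [ringPr_zero_eq_sum]
  set N := ∑ s : K, Nat.card (centralizerIn K s)
  set z := Nat.card (relCenter K K)
  qify at h hidx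
  rcases n with _ | m
  · rw [pow_zero, one_mul] at hidx
    rw [hidx] at h
    rw [le_div_iff₀ (by positivity), hidx]
    simpa using (by linarith : (z : ℚ) * z ≤ N)
  · rw [show 2 * (m + 1) - 1 = 2 * m + 1 by omega, Nat.add_sub_cancel,
      div_le_div_iff₀ (by positivity) (by positivity)]
    calc ((p : ℚ) ^ (m + 1) + p ^ m - 1) * (Nat.card K * Nat.card K)
        = (z * Nat.card K + Nat.card K * (p * z) - z * (p * z)) * p ^ (2 * m + 1) := by
          rw [hidx]; ring
      _ ≤ N * p ^ (2 * m + 1) := by gcongr; linarith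

end ringPr

theorem ringPr_bounds_of_index_prime_pow_general {R : Type*} [NonUnitalRing R] [Fintype R]
    (S K : NonUnitalSubring R) (p n : ℕ) (hp : p.Prime)
    (hmin : ∀ q : ℕ, q.Prime → q ∣ Nat.card R → p ≤ q)
    (hidx : Nat.card S = p ^ n * Nat.card {s : R // s ∈ S ∧ ∀ k ∈ K, s * k = k * s}) :
    ringPr S K 0 ≤ ((p : ℚ) ^ n + p - 1) / (p : ℚ) ^ (n + 1) ∧
      (S = K → ringPr S K 0 ≥ ((p : ℚ) ^ n + (p : ℚ) ^ (n - 1) - 1) / (p : ℚ) ^ (2 * n - 1)) := by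
  rw [← card_relCenter] at hidx
  refine ⟨ringPr_zero_le_of_card_eq_pow_mul S K hp.pos hmin hidx, ?_⟩
  rintro rfl
  exact le_ringPr_self_zero_of_card_eq_pow_mul S hp.pos hmin hidx

theorem ringPr_bounds_of_index_prime_pow {R : Type*} [NonUnitalRing R] [Fintype R]
    (S K : NonUnitalSubring R) (hSK : S ≤ K) (p n : ℕ) (hp : p.Prime)
    (hpdvd : p ∣ Nat.card R) (hmin : ∀ q : ℕ, q.Prime → q ∣ Nat.card R → p ≤ q)
    (hidx : Nat.card S = p ^ n * Nat.card {s : R // s ∈ S ∧ ∀ k ∈ K, s * k = k * s}) :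
    ringPr S K 0 ≤ ((p : ℚ) ^ n + p - 1) / (p : ℚ) ^ (n + 1) ∧
      (S = K → ringPr S K 0 ≥ ((p : ℚ) ^ n + (p : ℚ) ^ (n - 1) - 1) / (p : ℚ) ^ (2 * n - 1)) :=
  ringPr_bounds_of_index_prime_pow_general S K p n hp hmin hidx
end

section
/- Let S, K be subrings of a finite ring R with [S,K] ≠ {0} (i.e., there exist s ∈ S, k ∈ K with sk ≠ ks), and let p be the smallest prime dividing |R|. Then Pr(S,K) ≤ (2p-1)/p². In particular Pr(S,K) ≤ 3/4. -/
/-- The additive subgroup of elements of `K` commuting with a fixed `s`. -/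
def ctrAdd {R : Type*} [NonUnitalRing R] (K : NonUnitalSubring R) (s : R) : AddSubgroup R where
  carrier := {k | k ∈ K ∧ s * k = k * s}
  zero_mem' := ⟨K.zero_mem, by simp⟩
  add_mem' := fun {a b} ha hb => ⟨K.add_mem ha.1 hb.1, by rw [mul_add, add_mul, ha.2, hb.2]⟩
  neg_mem' := fun {a} ha => ⟨K.neg_mem ha.1, by rw [mul_neg, neg_mul, ha.2]⟩

@[simp] lemma mem_ctrAdd {R : Type*} [NonUnitalRing R] {K : NonUnitalSubring R} {s k : R} :
    k ∈ ctrAdd K s ↔ k ∈ K ∧ s * k = k * s := Iff.rfl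

/-- The additive subgroup of elements of `S` commuting with everything in `K`. -/
def dctrAdd {R : Type*} [NonUnitalRing R] (S K : NonUnitalSubring R) : AddSubgroup R where
  carrier := {s | s ∈ S ∧ ∀ k ∈ K, s * k = k * s}
  zero_mem' := ⟨S.zero_mem, by simp⟩
  add_mem' := fun {a b} ha hb => ⟨S.add_mem ha.1 hb.1,
    fun k hk => by rw [add_mul, mul_add, ha.2 k hk, hb.2 k hk]⟩
  neg_mem' := fun {a} ha => ⟨S.neg_mem ha.1,
    fun k hk => by rw [neg_mul, mul_neg, ha.2 k hk]⟩

@[simp] lemma mem_dctrAdd {R : Type*} [NonUnitalRing R] {S K : NonUnitalSubring R} {a : R} :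
    a ∈ dctrAdd S K ↔ a ∈ S ∧ ∀ k ∈ K, a * k = k * a := Iff.rfl

/-- If `H < K'` are additive subgroups of a finite ring whose least prime factor of the
cardinality is at least `p`, then `p * |H| ≤ |K'|`. -/
lemma aux_card {R : Type*} [NonUnitalRing R] [Fintype R] {p : ℕ}
    (hmin : ∀ q : ℕ, q.Prime → q ∣ Nat.card R → p ≤ q)
    {H K' : AddSubgroup R} (hle : H ≤ K') (hne : H ≠ K') :
    p * Nat.card H ≤ Nat.card K' := by
  have h2 : Nat.card K' ∣ Nat.card R := AddSubgroup.card_addSubgroup_dvd_card K'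
  obtain ⟨m, hm⟩ : Nat.card H ∣ Nat.card K' := AddSubgroup.card_dvd_of_le hle
  have hH0 : 0 < Nat.card H := Nat.card_pos
  have hK0 : 0 < Nat.card K' := Nat.card_pos
  have hm0 : m ≠ 0 := by rintro rfl; simp [hm] at hK0
  have hm1 : m ≠ 1 := by
    rintro rfl
    rw [mul_one] at hm
    apply hne
    apply SetLike.coe_injective
    apply Set.eq_of_subset_of_ncard_le hle
    · rw [← Nat.card_coe_set_eq, ← Nat.card_coe_set_eq]
      exact le_of_eq hm
  have hq : m.minFac.Prime := Nat.minFac_prime hm1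
  have hmR : m ∣ Nat.card R := dvd_trans ⟨Nat.card H, by rw [hm, mul_comm]⟩ h2
  have hpq : p ≤ m.minFac := hmin _ hq ((m.minFac_dvd).trans hmR)
  have hqm : m.minFac ≤ m := Nat.minFac_le (Nat.pos_of_ne_zero hm0)
  calc p * Nat.card H ≤ m * Nat.card H := Nat.mul_le_mul_right _ (hpq.trans hqm)
    _ = Nat.card K' := by rw [hm, mul_comm]

lemma aux_q (a b A B cK p : ℚ) (hp : 2 ≤ p) (hcK : 0 ≤ cK)
    (hA : A ≤ a * cK) (hB : p * B ≤ b * cK) (hpa : p * a ≤ a + b) :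
    (B + A) * p ^ 2 ≤ (2 * p - 1) * ((b + a) * cK) := by
  have hp0 : (0:ℚ) ≤ p := by linarith
  have h1 : p * (p * B) ≤ p * (b * cK) := mul_le_mul_of_nonneg_left hB hp0
  have h2 : (p - 1) * a ≤ b := by nlinarith
  have h3 : (p - 1) * ((p - 1) * a) * cK ≤ (p - 1) * b * cK :=
    mul_le_mul_of_nonneg_right (mul_le_mul_of_nonneg_left h2 (by linarith)) hcK
  nlinarith [mul_le_mul_of_nonneg_right hA (mul_self_nonneg p)]

open Finset in
theorem ringPr_le_of_noncomm {R : Type*} [NonUnitalRing R] [Fintype R]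
    (S K : NonUnitalSubring R) (h : ∃ s ∈ S, ∃ k ∈ K, s * k ≠ k * s)
    (p : ℕ) (hp : p.Prime) (hpdvd : p ∣ Nat.card R)
    (hmin : ∀ q : ℕ, q.Prime → q ∣ Nat.card R → p ≤ q) :
    ringPr S K 0 ≤ (2 * (p : ℚ) - 1) / (p : ℚ) ^ 2 ∧ ringPr S K 0 ≤ 3 / 4 := by
  classical
  obtain ⟨s0, hs0, k0, hk0, hne0⟩ := h
  set cS := Nat.card S with hcSdef
  set cK := Nat.card K with hcKdef
  have hp2 : 2 ≤ p := hp.two_le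
  have hcS : 0 < cS := Nat.card_pos
  have hcK : 0 < cK := Nat.card_pos
  have hN : Nat.card {q : R × R // q.1 ∈ S ∧ q.2 ∈ K ∧ q.1 * q.2 - q.2 * q.1 = 0}
      = ∑ s : R, (univ.filter fun k => s ∈ S ∧ k ∈ K ∧ s * k = k * s).card := by
    rw [Nat.card_eq_fintype_card, Fintype.card_subtype]
    rw [Finset.card_filter, ← Finset.univ_product_univ, Finset.sum_product]
    congr 1; ext s
    rw [Finset.card_filter]
    congr 1; ext k; congr 1
    simp only [eq_iff_iff, sub_eq_zero]
  set f : R → ℕ := fun s => (univ.filter fun k => s ∈ S ∧ k ∈ K ∧ s * k = k * s).card with hfdef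
  have hcK_filter : cK = (univ.filter fun k : R => k ∈ K).card := by
    rw [hcKdef, Nat.card_eq_fintype_card, ← Fintype.card_subtype]
  have hcKA : Nat.card K.toAddSubgroup = cK := rfl
  have hcSA : Nat.card S.toAddSubgroup = cS := rfl
  have hf_le : ∀ s : R, f s ≤ cK := by
    intro s
    rw [hcK_filter]
    exact Finset.card_le_card (by intro k hk; simp only [Finset.mem_filter] at hk ⊢; tauto)
  have hf_p : ∀ s : R, s ∉ dctrAdd S K → p * f s ≤ cK := by
    intro s hs
    by_cases hsS : s ∈ S
    · have hflt : (univ.filter fun k => s ∈ S ∧ k ∈ K ∧ s * k = k * s)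
          = univ.filter (fun k : R => k ∈ ctrAdd K s) := by
        ext k; simp [hsS]
      have hfs : f s = Nat.card (ctrAdd K s) := by
        rw [hfdef]
        simp only [hflt]
        rw [Nat.card_eq_fintype_card, Fintype.card_subtype]
      rw [hfs, ← hcKA]
      apply aux_card hmin
      · intro k hk
        rw [NonUnitalSubring.mem_toAddSubgroup]
        exact hk.1
      · intro heq
        apply hs
        refine ⟨hsS, fun k hk => ?_⟩
        have : k ∈ ctrAdd K s := by
          rw [heq, NonUnitalSubring.mem_toAddSubgroup]; exact hk
        exact this.2
    · have : f s = 0 := by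
        rw [hfdef]
        simp only [Finset.card_eq_zero]
        apply Finset.filter_false_of_mem
        intro k _ hk
        exact hsS hk.1
      simp [this]
  have hD : p * Nat.card (dctrAdd S K) ≤ cS := by
    rw [← hcSA]
    apply aux_card hmin
    · intro s hs
      rw [NonUnitalSubring.mem_toAddSubgroup]
      exact hs.1
    · intro heq
      apply hne0
      have : s0 ∈ dctrAdd S K := by
        rw [heq, NonUnitalSubring.mem_toAddSubgroup]; exact hs0
      exact this.2 k0 hk0
  set DF := univ.filter (fun s : R => s ∈ dctrAdd S K) with hDFdef
  set SF := univ.filter (fun s : R => s ∈ S) with hSFdef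
  have hDFS : DF ⊆ SF := by
    intro s hs
    simp only [hDFdef, hSFdef, Finset.mem_filter] at hs ⊢
    exact ⟨hs.1, hs.2.1⟩
  have hcDF : Nat.card (dctrAdd S K) = DF.card := by
    rw [hDFdef, Nat.card_eq_fintype_card, Fintype.card_subtype]
  have hcSF : SF.card = cS := by
    rw [hSFdef, hcSdef, Nat.card_eq_fintype_card, Fintype.card_subtype]
  have hsumSF : ∑ s : R, f s = ∑ s ∈ SF, f s := by
    refine (Finset.sum_subset (Finset.subset_univ SF) ?_).symm
    intro s _ hs
    simp only [hSFdef, Finset.mem_filter, Finset.mem_univ, true_and] at hs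
    rw [hfdef]
    simp only [Finset.card_eq_zero]
    apply Finset.filter_false_of_mem
    intro k _ hk
    exact hs hk.1
  have hsplit : ∑ s ∈ SF \ DF, f s + ∑ s ∈ DF, f s = ∑ s ∈ SF, f s :=
    Finset.sum_sdiff hDFS
  set a := DF.card with hadef
  set b := (SF \ DF).card with hbdef
  have hab : b + a = cS := by
    rw [hbdef, hadef, Finset.card_sdiff_add_card_eq_card hDFS, hcSF]
  set A := ∑ s ∈ DF, f s with hAdef
  set B := ∑ s ∈ SF \ DF, f s with hBdef
  have hA : A ≤ a * cK := by
    rw [hAdef, hadef]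
    calc ∑ s ∈ DF, f s ≤ ∑ _s ∈ DF, cK := Finset.sum_le_sum (fun s _ => hf_le s)
      _ = DF.card * cK := by rw [Finset.sum_const, smul_eq_mul]
  have hB : p * B ≤ b * cK := by
    rw [hBdef, hbdef, Finset.mul_sum]
    calc ∑ s ∈ SF \ DF, p * f s ≤ ∑ _s ∈ SF \ DF, cK := by
          apply Finset.sum_le_sum
          intro s hs
          apply hf_p
          simp only [hDFdef, Finset.mem_sdiff, Finset.mem_filter, Finset.mem_univ, true_and] at hs
          exact hs.2
      _ = (SF \ DF).card * cK := by rw [Finset.sum_const, smul_eq_mul]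
  have hpa : p * a ≤ a + b := by
    have h1 : p * a ≤ cS := by rw [hcDF] at hD; exact hD
    omega
  -- the key rational inequality
  have key : (Nat.card {q : R × R // q.1 ∈ S ∧ q.2 ∈ K ∧ q.1 * q.2 - q.2 * q.1 = 0} : ℚ) * (p:ℚ) ^ 2
      ≤ (2 * (p:ℚ) - 1) * ((cS : ℚ) * (cK : ℚ)) := by
    have hNval : Nat.card {q : R × R // q.1 ∈ S ∧ q.2 ∈ K ∧ q.1 * q.2 - q.2 * q.1 = 0} = B + A := by
      rw [hN, hsumSF, ← hsplit]
    rw [hNval, ← hab]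
    push_cast
    apply aux_q
    · exact_mod_cast hp2
    · positivity
    · exact_mod_cast hA
    · exact_mod_cast hB
    · exact_mod_cast hpa
  have hp2q : (2:ℚ) ≤ (p:ℚ) := by exact_mod_cast hp2
  have hden : (0:ℚ) < (cS : ℚ) * (cK : ℚ) := by positivity
  have hpsq : (0:ℚ) < (p:ℚ) ^ 2 := by positivity
  have h1 : ringPr S K 0 ≤ (2 * (p : ℚ) - 1) / (p : ℚ) ^ 2 := by
    rw [ringPr, div_le_div_iff₀ hden hpsq]
    exact key
  refine ⟨h1, h1.trans ?_⟩
  rw [div_le_div_iff₀ hpsq (by norm_num : (0:ℚ) < 4)]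
  nlinarith [sq_nonneg ((p:ℚ) - 2)]
end

section
/- Let S, K be subrings of a finite ring R with Z(S,K) ≠ S. Then Pr(S,K) ≥ (1/|[S,K]|)·(1 + (|[S,K]|-1)/|S:Z(S,K)|) > 1/|[S,K]|, where [S,K] is the additive subgroup generated by {sk-ks : s∈S, k∈K}. -/
/-! Counting commuting pairs row by row, `Pr(S,K)` is the average over `s ∈ S` of
`|C_K(s)| / |K|`. The map `k ↦ sk - ks` is an additive homomorphism from `K` into `[S,K]`
with kernel `C_K(s)`, so `|C_K(s)| ≥ |K| / |[S,K]|` for every `s`, and `C_K(s) = K` for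
`s ∈ Z(S,K)`. Averaging gives `Pr(S,K) ≥ z/n + (1 - z/n)/|[S,K]|` with `z/n = 1/|S : Z(S,K)|`,
which exceeds `1/|[S,K]|` as soon as `[S,K] ≠ 0`, since `0 ∈ Z(S,K)`. -/

theorem AddMonoidHom.card_le_card_mul_card_ker {A B : Type*} [AddGroup A] [AddGroup B]
    [Finite B] (φ : A →+ B) {C : AddSubgroup B} (hC : φ.range ≤ C) :
    Nat.card A ≤ Nat.card C * Nat.card φ.ker := by
  rw [← φ.ker.card_mul_index, AddSubgroup.index_ker, mul_comm]
  exact Nat.mul_le_mul_right _ (AddSubgroup.card_le_of_le hC)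

open Finset

namespace NonUnitalSubring

variable {R : Type*} [NonUnitalRing R]

def commutatorHom (K : NonUnitalSubring R) (s : R) : K →+ R :=
  (AddMonoidHom.mulLeft s - AddMonoidHom.mulRight s).comp K.toAddSubgroup.subtype

theorem card_le_card_mul_card_commute [Finite R] (K : NonUnitalSubring R) {C : AddSubgroup R}
    {s : R} (hC : ∀ k ∈ K, s * k - k * s ∈ C) :
    Nat.card K ≤ Nat.card C * Nat.card {k : K // s * k = k * s} := by
  have hker : Nat.card (K.commutatorHom s).ker = Nat.card {k : K // s * k = k * s} :=
    Nat.card_congr <| Equiv.subtypeEquivRight fun k => sub_eq_zero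
  rw [← hker]
  refine (K.commutatorHom s).card_le_card_mul_card_ker ?_
  rintro _ ⟨k, rfl⟩
  exact hC k k.2

theorem card_commutingPairs_eq_card_sigma (S K : NonUnitalSubring R) :
    Nat.card {p : R × R // p.1 ∈ S ∧ p.2 ∈ K ∧ p.1 * p.2 - p.2 * p.1 = 0} =
      Nat.card (Σ s : S, {k : K // (s : R) * k = k * s}) :=
  Nat.card_congr
    { toFun p := ⟨⟨p.1.1, p.2.1⟩, ⟨p.1.2, p.2.2.1⟩, sub_eq_zero.mp p.2.2.2⟩
      invFun q := ⟨(q.1, q.2.1), q.1.2, q.2.1.2, sub_eq_zero.mpr q.2.2⟩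
      left_inv _ := rfl
      right_inv _ := rfl }

theorem card_mul_card_add_le_mul_card_commutingPairs [Finite R] (S K : NonUnitalSubring R)
    {C : AddSubgroup R} (hC : ∀ s ∈ S, ∀ k ∈ K, s * k - k * s ∈ C) :
    Nat.card K * Nat.card S + (Nat.card C - 1) *
        Nat.card {s : R // s ∈ S ∧ ∀ k ∈ K, s * k = k * s} * Nat.card K ≤
      Nat.card C *
        Nat.card {p : R × R // p.1 ∈ S ∧ p.2 ∈ K ∧ p.1 * p.2 - p.2 * p.1 = 0} := by
  classical
  have := Fintype.ofFinite R
  set m := Nat.card K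
  set c := Nat.card C
  have hc : 1 ≤ c := Nat.card_pos
  have hpoint (s : S) : m + (c - 1) * (if ∀ k ∈ K, (s : R) * k = k * s then m else 0) ≤
      c * Nat.card {k : K // (s : R) * k = k * s} := by
    split_ifs with hs
    · rw [Nat.card_congr (Equiv.subtypeUnivEquiv fun k : K => hs k k.2)]
      zify [hc]
      linarith
    · rw [mul_zero, add_zero]
      exact K.card_le_card_mul_card_commute (hC s s.2)
  have hcentral : Nat.card {s : R // s ∈ S ∧ ∀ k ∈ K, s * k = k * s} =
      #{s : S | ∀ k ∈ K, (s : R) * k = k * s} := by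
    rw [← Fintype.card_subtype, ← Nat.card_eq_fintype_card]
    exact Nat.card_congr (Equiv.subtypeSubtypeEquivSubtypeInter (· ∈ S) _).symm
  calc _ = ∑ s : S, (m + (c - 1) * if ∀ k ∈ K, (s : R) * k = k * s then m else 0) := by
        simp only [sum_add_distrib, ← mul_sum, sum_ite, sum_const, smul_eq_mul, card_univ,
          hcentral, Nat.card_eq_fintype_card]
        ring
    _ ≤ ∑ s : S, c * Nat.card {k : K // (s : R) * k = k * s} := sum_le_sum fun s _ => hpoint s
    _ = _ := by rw [← mul_sum, card_commutingPairs_eq_card_sigma, Nat.card_sigma]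

end NonUnitalSubring

theorem ringPr_zero_ge_of_commutator_mem {R : Type*} [NonUnitalRing R] [Fintype R]
    (S K : NonUnitalSubring R) {C : AddSubgroup R}
    (hC : ∀ s ∈ S, ∀ k ∈ K, s * k - k * s ∈ C) :
    1 / (Nat.card C : ℚ) * (1 + ((Nat.card C : ℚ) - 1) / ((Nat.card S : ℚ) /
        (Nat.card {s : R // s ∈ S ∧ ∀ k ∈ K, s * k = k * s} : ℚ))) ≤ ringPr S K 0 := by
  have key := S.card_mul_card_add_le_mul_card_commutingPairs K hC
  set c := Nat.card C
  set z := Nat.card {s : R // s ∈ S ∧ ∀ k ∈ K, s * k = k * s}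
  have hc : 1 ≤ c := Nat.card_pos
  have hn : 0 < Nat.card S := Nat.card_pos
  have hm : 0 < Nat.card K := Nat.card_pos
  have hkey : (Nat.card K * Nat.card S + (c - 1) * z * Nat.card K : ℚ) ≤
      c * Nat.card {p : R × R // p.1 ∈ S ∧ p.2 ∈ K ∧ p.1 * p.2 - p.2 * p.1 = 0} := by
    exact_mod_cast key
  rw [ringPr, le_div_iff₀ (by positivity), div_div_eq_mul_div]
  calc _ = (Nat.card K * Nat.card S + (c - 1) * z * Nat.card K : ℚ) / c := by
        field_simp
    _ ≤ _ := by
      rw [div_le_iff₀ (by positivity)]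
      linarith

theorem ringPr_gt_inv_card_commutator {R : Type*} [NonUnitalRing R] [Fintype R]
    (S K : NonUnitalSubring R) (h : ∃ s ∈ S, ∃ k ∈ K, s * k ≠ k * s) :
    ringPr S K 0 ≥
        (1 / (Nat.card (AddSubgroup.closure {x : R | ∃ s ∈ S, ∃ k ∈ K, s * k - k * s = x}) : ℚ)) *
          (1 + ((Nat.card (AddSubgroup.closure {x : R | ∃ s ∈ S, ∃ k ∈ K, s * k - k * s = x}) : ℚ) - 1) /
            ((Nat.card S : ℚ) / (Nat.card {s : R // s ∈ S ∧ ∀ k ∈ K, s * k = k * s} : ℚ))) ∧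
      (1 / (Nat.card (AddSubgroup.closure {x : R | ∃ s ∈ S, ∃ k ∈ K, s * k - k * s = x}) : ℚ)) *
          (1 + ((Nat.card (AddSubgroup.closure {x : R | ∃ s ∈ S, ∃ k ∈ K, s * k - k * s = x}) : ℚ) - 1) /
            ((Nat.card S : ℚ) / (Nat.card {s : R // s ∈ S ∧ ∀ k ∈ K, s * k = k * s} : ℚ))) >
        1 / (Nat.card (AddSubgroup.closure {x : R | ∃ s ∈ S, ∃ k ∈ K, s * k - k * s = x}) : ℚ) := by
  set C := AddSubgroup.closure {x : R | ∃ s ∈ S, ∃ k ∈ K, s * k - k * s = x}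
  have hC : ∀ s ∈ S, ∀ k ∈ K, s * k - k * s ∈ C :=
    fun s hs k hk => AddSubgroup.subset_closure ⟨s, hs, k, hk, rfl⟩
  have hc : 1 < Nat.card C := by
    obtain ⟨s, hs, k, hk, hsk⟩ := h
    rw [AddSubgroup.one_lt_card_iff_ne_bot]
    intro hbot
    simpa [hbot, sub_eq_zero, hsk] using hC s hs k hk
  have : Nonempty {s : R // s ∈ S ∧ ∀ k ∈ K, s * k = k * s} := ⟨0, S.zero_mem, by simp⟩
  have hz : 0 < Nat.card {s : R // s ∈ S ∧ ∀ k ∈ K, s * k = k * s} := Nat.card_pos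
  have hn : 0 < Nat.card S := Nat.card_pos
  refine ⟨ringPr_zero_ge_of_commutator_mem S K hC, ?_⟩
  have hc' : (1 : ℚ) < Nat.card C := by exact_mod_cast hc
  rw [gt_iff_lt, lt_mul_iff_one_lt_right (by positivity), lt_add_iff_pos_right]
  exact div_pos (by linarith) (by positivity)
end

section
/- Let S, K be subrings of a finite ring R such that [x,S] ⊆ [x,K] for all x ∈ S ∪ K, where [x,S] = {xs-sx : s ∈ S}. Then Pr(K) ≤ Pr(S,K) ≤ Pr(S), where Pr(S) = Pr(S,S). -/
section Aux

variable {R : Type*} [NonUnitalRing R] [Fintype R]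

noncomputable instance nusFintype (A : NonUnitalSubring R) : Fintype A :=
  Fintype.ofFinite A

/-- The commutator map `k ↦ x*k - k*x` as an additive monoid hom on `K`. -/
private def commHom (x : R) (K : NonUnitalSubring R) : K →+ R where
  toFun k := x * (k : R) - (k : R) * x
  map_zero' := by simp
  map_add' a b := by
    push_cast
    rw [mul_add, add_mul]
    abel

private lemma card_centralizer_mul_card_image (x : R) (K : NonUnitalSubring R) :
    Nat.card {k : R // k ∈ K ∧ x * k = k * x} *
      Nat.card {y : R | ∃ k ∈ K, x * k - k * x = y} = Nat.card K := by
  have e1 : {k : R // k ∈ K ∧ x * k = k * x} ≃ (commHom x K).ker :=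
    { toFun := fun k => ⟨⟨k.1, k.2.1⟩, by
        simp only [AddMonoidHom.mem_ker, commHom, AddMonoidHom.coe_mk, ZeroHom.coe_mk]
        rw [sub_eq_zero]; exact k.2.2⟩
      invFun := fun k => ⟨(k.1 : R), k.1.2, by
        have hk := k.2
        simp only [AddMonoidHom.mem_ker, commHom, AddMonoidHom.coe_mk, ZeroHom.coe_mk] at hk
        exact sub_eq_zero.mp hk⟩
      left_inv := fun _ => rfl
      right_inv := fun _ => rfl }
  have e2 : {y : R | ∃ k ∈ K, x * k - k * x = y} ≃ (commHom x K).range := by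
    apply Equiv.setCongr
    ext y
    simp only [Set.mem_setOf_eq, SetLike.mem_coe, AddMonoidHom.mem_range]
    constructor
    · rintro ⟨k, hk, hy⟩
      exact ⟨⟨k, hk⟩, hy⟩
    · rintro ⟨⟨k, hk⟩, hy⟩
      exact ⟨k, hk, hy⟩
  rw [Nat.card_congr e1, Nat.card_congr e2,
    AddSubgroup.card_eq_card_quotient_mul_card_addSubgroup (s := (commHom x K).ker),
    Nat.card_congr (QuotientAddGroup.quotientKerEquivRange (commHom x K)).toEquiv]
  ring

private lemma card_pairs (A B : NonUnitalSubring R) :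
    Nat.card {p : R × R // p.1 ∈ A ∧ p.2 ∈ B ∧ p.1 * p.2 - p.2 * p.1 = 0} =
      ∑ a : A, Nat.card {k : R // k ∈ B ∧ (a : R) * k = k * (a : R)} := by
  classical
  rw [Nat.card_congr
    (⟨fun p => ⟨⟨p.1.1, p.2.1⟩, ⟨p.1.2, p.2.2.1, sub_eq_zero.mp p.2.2.2⟩⟩,
      fun q => ⟨(q.1.1, q.2.1), q.1.2, q.2.2.1, sub_eq_zero.mpr q.2.2.2⟩,
      fun _ => rfl, fun _ => rfl⟩ :
      _ ≃ (Σ a : A, {k : R // k ∈ B ∧ (a : R) * k = k * (a : R)})),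
    Nat.card_eq_fintype_card, Fintype.card_sigma]
  simp [Nat.card_eq_fintype_card]

private lemma ringPr_eq (A B : NonUnitalSubring R) :
    ringPr A B 0 = ∑ a : A,
      (Nat.card {k : R // k ∈ B ∧ (a : R) * k = k * (a : R)} : ℚ) /
        ((Nat.card A : ℚ) * (Nat.card B : ℚ)) := by
  rw [ringPr, card_pairs, Nat.cast_sum, Finset.sum_div]

private lemma ringPr_comm (A B : NonUnitalSubring R) : ringPr A B 0 = ringPr B A 0 := by
  unfold ringPr
  rw [Nat.card_congr
    (⟨fun p => ⟨(p.1.2, p.1.1), p.2.2.1, p.2.1,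
        sub_eq_zero.mpr (sub_eq_zero.mp p.2.2.2).symm⟩,
      fun p => ⟨(p.1.2, p.1.1), p.2.2.1, p.2.1,
        sub_eq_zero.mpr (sub_eq_zero.mp p.2.2.2).symm⟩,
      fun _ => rfl, fun _ => rfl⟩ :
      {p : R × R // p.1 ∈ A ∧ p.2 ∈ B ∧ p.1 * p.2 - p.2 * p.1 = 0} ≃
      {p : R × R // p.1 ∈ B ∧ p.2 ∈ A ∧ p.1 * p.2 - p.2 * p.1 = 0}),
    mul_comm (Nat.card A : ℚ)]

private lemma ringPr_le (A B C : NonUnitalSubring R)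
    (h : ∀ x : R, x ∈ A →
      {y : R | ∃ b ∈ B, x * b - b * x = y} ⊆ {y : R | ∃ c ∈ C, x * c - c * x = y}) :
    ringPr A C 0 ≤ ringPr A B 0 := by
  rw [ringPr_eq, ringPr_eq]
  apply Finset.sum_le_sum
  intro a _
  haveI : Nonempty A := ⟨⟨0, A.zero_mem⟩⟩
  haveI : Nonempty B := ⟨⟨0, B.zero_mem⟩⟩
  haveI : Nonempty C := ⟨⟨0, C.zero_mem⟩⟩
  have hA0 : (0 : ℚ) < Nat.card A := by exact_mod_cast Nat.card_pos
  have hB0 : (0 : ℚ) < Nat.card B := by exact_mod_cast Nat.card_pos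
  have hC0 : (0 : ℚ) < Nat.card C := by exact_mod_cast Nat.card_pos
  set cB := Nat.card {k : R // k ∈ B ∧ (a : R) * k = k * (a : R)} with hcB
  set cC := Nat.card {k : R // k ∈ C ∧ (a : R) * k = k * (a : R)} with hcC
  have hcB0 : 0 < cB := by
    rw [hcB]
    exact @Nat.card_pos _ ⟨⟨0, B.zero_mem, by simp⟩⟩ _
  have hcC0 : 0 < cC := by
    rw [hcC]
    exact @Nat.card_pos _ ⟨⟨0, C.zero_mem, by simp⟩⟩ _
  have hi : Nat.card {y : R | ∃ b ∈ B, (a : R) * b - b * (a : R) = y} ≤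
      Nat.card {y : R | ∃ c ∈ C, (a : R) * c - c * (a : R) = y} :=
    Nat.card_mono (Set.toFinite _) (h a a.2)
  have key : (cC : ℚ) / (Nat.card C : ℚ) ≤ (cB : ℚ) / (Nat.card B : ℚ) := by
    rw [div_le_div_iff₀ hC0 hB0]
    have hnat : cC * Nat.card B ≤ cB * Nat.card C := by
      rw [← card_centralizer_mul_card_image (a : R) B,
        ← card_centralizer_mul_card_image (a : R) C, ← hcB, ← hcC,
        ← mul_assoc, ← mul_assoc, mul_comm cC cB]
      exact Nat.mul_le_mul_left _ hi
    exact_mod_cast hnat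
  calc (cC : ℚ) / ((Nat.card A : ℚ) * (Nat.card C : ℚ))
      = ((cC : ℚ) / (Nat.card C : ℚ)) / (Nat.card A : ℚ) := by
        rw [div_div, mul_comm]
    _ ≤ ((cB : ℚ) / (Nat.card B : ℚ)) / (Nat.card A : ℚ) := by gcongr
    _ = (cB : ℚ) / ((Nat.card A : ℚ) * (Nat.card B : ℚ)) := by
        rw [div_div, mul_comm]

end Aux

theorem ringPr_between {R : Type*} [NonUnitalRing R] [Fintype R]
    (S K : NonUnitalSubring R)
    (h : ∀ x : R, x ∈ S ∨ x ∈ K →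
      {y : R | ∃ s ∈ S, x * s - s * x = y} ⊆ {y : R | ∃ k ∈ K, x * k - k * x = y}) :
    ringPr K K 0 ≤ ringPr S K 0 ∧ ringPr S K 0 ≤ ringPr S S 0 := by
  constructor
  · rw [ringPr_comm S K]
    exact ringPr_le K S K (fun x hx => h x (Or.inr hx))
  · exact ringPr_le S S K (fun x hx => h x (Or.inl hx))
end
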